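/- arXiv:1602.07118 — 2 statements merged into one kernel-verified Lean document; each statement's English description precedes it below -/
import Mathlib

section
/- Let X and Y be metrizable topological spaces with Y compact, and let M ⊆ X × Y be a σ-discrete subset of the product space. Then the projection pr_X M = {x ∈ X : ∃ y ∈ Y, (x, y) ∈ M} is a σ-discrete subset of X. -/
/-- A set `S` is discrete in the ambient space `Z` if every point of `S` has a
neighborhood in `Z` meeting `S` only in that point. -/
def IsDiscreteIn {Z : Type*} [TopologicalSpace Z] (S : Set Z) : Prop :=
  ∀ x ∈ S, ∃ U ∈ nhds x, U ∩ S = {x}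

/-- A set is σ-discrete if it is a countable union of discrete sets. -/
def IsSigmaDiscrete {Z : Type*} [TopologicalSpace Z] (S : Set Z) : Prop :=
  ∃ T : ℕ → Set Z, (∀ n, IsDiscreteIn (T n)) ∧ S = ⋃ n, T n

lemma isDiscreteIn_empty {Z : Type*} [TopologicalSpace Z] : IsDiscreteIn (∅ : Set Z) := by
  intro x hx; exact absurd hx (Set.notMem_empty x)

/-- A countable union of discrete sets is σ-discrete. -/
lemma isSigmaDiscrete_iUnion_discrete {Z : Type*} [TopologicalSpace Z] {ι : Type*} [Countable ι]
    (D : ι → Set Z) (hD : ∀ i, IsDiscreteIn (D i)) : IsSigmaDiscrete (⋃ i, D i) := by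
  cases isEmpty_or_nonempty ι with
  | inl h =>
    refine ⟨fun _ => ∅, fun _ => isDiscreteIn_empty, ?_⟩
    simp
  | inr h =>
    obtain ⟨f, hf⟩ := exists_surjective_nat ι
    refine ⟨fun n => D (f n), fun n => hD (f n), ?_⟩
    ext x
    simp only [Set.mem_iUnion]
    exact ⟨fun ⟨i, hi⟩ => (hf i).elim fun n hn => ⟨n, hn ▸ hi⟩, fun ⟨n, hn⟩ => ⟨f n, hn⟩⟩

/-- A countable union of σ-discrete sets is σ-discrete. -/
lemma isSigmaDiscrete_iUnion {Z : Type*} [TopologicalSpace Z] {ι : Type*} [Countable ι]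
    (S : ι → Set Z) (hS : ∀ i, IsSigmaDiscrete (S i)) : IsSigmaDiscrete (⋃ i, S i) := by
  choose T hT hTS using hS
  have : (⋃ i, S i) = ⋃ p : ι × ℕ, T p.1 p.2 := by
    ext x
    simp only [Set.mem_iUnion, Prod.exists]
    constructor
    · rintro ⟨i, hi⟩
      rw [hTS i] at hi
      obtain ⟨n, hn⟩ := Set.mem_iUnion.1 hi
      exact ⟨i, n, hn⟩
    · rintro ⟨i, n, hn⟩
      exact ⟨i, (hTS i).symm ▸ Set.mem_iUnion.2 ⟨n, hn⟩⟩
  rw [this]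
  exact isSigmaDiscrete_iUnion_discrete _ fun p => hT p.1 p.2

/-- An ε-separated set (ε > 0) in a metric space is discrete. -/
lemma isDiscreteIn_of_separated {Z : Type*} [MetricSpace Z] {S : Set Z} {ε : ℝ} (hε : 0 < ε)
    (hsep : ∀ p ∈ S, ∀ q ∈ S, p ≠ q → ε ≤ dist p q) : IsDiscreteIn S := by
  intro x hx
  refine ⟨Metric.ball x ε, Metric.ball_mem_nhds x hε, ?_⟩
  ext q
  simp only [Set.mem_inter_iff, Metric.mem_ball, Set.mem_singleton_iff]
  constructor
  · rintro ⟨hq, hqS⟩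
    by_contra hne
    exact absurd hq (not_lt.2 (hsep q hqS x hx hne))
  · rintro rfl
    exact ⟨by simpa using hε, hx⟩

/-- A discrete set in a metric space is a countable union of uniformly separated sets. -/
lemma discrete_eq_iUnion_separated {Z : Type*} [MetricSpace Z] {S : Set Z}
    (hS : IsDiscreteIn S) :
    ∃ T : ℕ → Set Z,
      (∀ n, ∀ p ∈ T n, ∀ q ∈ T n, p ≠ q → (1 : ℝ) / (n + 1) ≤ dist p q) ∧ S = ⋃ n, T n := by
  refine ⟨fun n => {p ∈ S | ∀ q ∈ S, dist p q < 1 / (n + 1) → q = p}, ?_, ?_⟩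
  · intro n p hp q hq hne
    by_contra hlt
    exact hne ((hp.2 q hq.1 (by push_neg at hlt; linarith [hlt])).symm)
  · ext p
    simp only [Set.mem_iUnion, Set.mem_setOf_eq]
    constructor
    · intro hp
      obtain ⟨U, hU, hUS⟩ := hS p hp
      obtain ⟨ε, hε, hball⟩ := Metric.mem_nhds_iff.1 hU
      obtain ⟨n, hn⟩ := exists_nat_one_div_lt hε
      refine ⟨n, hp, fun q hq hd => ?_⟩
      have : q ∈ U ∩ S := ⟨hball (by rw [Metric.mem_ball, dist_comm]; linarith), hq⟩
      rw [hUS] at this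
      exact this
    · rintro ⟨n, hp, _⟩
      exact hp

/-- Let `X` and `Y` be metrizable topological spaces with `Y` compact
and let `M ⊆ X × Y` be σ-discrete. Then the projection of `M` to `X` is σ-discrete. -/
theorem isSigmaDiscrete_proj {X Y : Type*} [TopologicalSpace X] [TopologicalSpace Y]
    [TopologicalSpace.MetrizableSpace X] [TopologicalSpace.MetrizableSpace Y]
    [CompactSpace Y] (M : Set (X × Y)) (hM : IsSigmaDiscrete M) :
    IsSigmaDiscrete {x : X | ∃ y : Y, (x, y) ∈ M} := by
  letI : MetricSpace X := TopologicalSpace.metrizableSpaceMetric X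
  letI : MetricSpace Y := TopologicalSpace.metrizableSpaceMetric Y
  -- First: the projection of an ε-separated set is σ-discrete.
  have key : ∀ (S : Set (X × Y)) (ε : ℝ), 0 < ε →
      (∀ p ∈ S, ∀ q ∈ S, p ≠ q → ε ≤ dist p q) →
      IsSigmaDiscrete {x : X | ∃ y : Y, (x, y) ∈ S} := by
    intro S ε hε hsep
    -- cover Y by finitely many balls of radius ε/3
    obtain ⟨t, htfin, htcov⟩ := (Metric.totallyBounded_iff.1
      (isCompact_univ : IsCompact (Set.univ : Set Y)).totallyBounded) (ε / 3) (by linarith)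
    haveI : Countable t := htfin.countable
    have heq : {x : X | ∃ y : Y, (x, y) ∈ S} =
        ⋃ y0 : t, {x : X | ∃ y : Y, (x, y) ∈ S ∧ dist y (y0 : Y) < ε / 3} := by
      ext x
      simp only [Set.mem_setOf_eq, Set.mem_iUnion]
      constructor
      · rintro ⟨y, hy⟩
        have : y ∈ ⋃ z ∈ t, Metric.ball z (ε / 3) := htcov (Set.mem_univ y)
        simp only [Set.mem_iUnion, Metric.mem_ball] at this
        obtain ⟨z, hz, hzd⟩ := this
        exact ⟨⟨z, hz⟩, y, hy, hzd⟩
      · rintro ⟨z, y, hy, _⟩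
        exact ⟨y, hy⟩
    rw [heq]
    refine isSigmaDiscrete_iUnion_discrete _ fun y0 => ?_
    refine isDiscreteIn_of_separated hε ?_
    rintro x ⟨y, hyS, hyd⟩ x' ⟨y', hyS', hyd'⟩ hne
    have hpq : (x, y) ≠ (x', y') := fun h => hne (congrArg Prod.fst h)
    have h1 : ε ≤ dist (x, y) (x', y') := hsep _ hyS _ hyS' hpq
    rw [Prod.dist_eq] at h1
    have h2 : dist y y' < ε := by
      calc dist y y' ≤ dist y (y0 : Y) + dist (y0 : Y) y' := dist_triangle _ _ _
        _ < ε / 3 + ε / 3 := by rw [dist_comm (y0 : Y) y']; exact add_lt_add hyd hyd'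
        _ < ε := by linarith
    simp only [max_le_iff, le_max_iff] at h1
    rcases h1 with h | h
    · exact h
    · exact absurd h (not_le.2 h2)
  -- decompose M
  obtain ⟨T, hTdisc, hTM⟩ := hM
  have : {x : X | ∃ y : Y, (x, y) ∈ M} = ⋃ n, {x : X | ∃ y : Y, (x, y) ∈ T n} := by
    ext x
    simp only [Set.mem_setOf_eq, Set.mem_iUnion, hTM, Set.mem_iUnion]
    exact ⟨fun ⟨y, n, h⟩ => ⟨n, y, h⟩, fun ⟨n, y, h⟩ => ⟨y, n, h⟩⟩
  rw [this]
  refine isSigmaDiscrete_iUnion _ fun n => ?_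
  obtain ⟨T', hsep, hT'⟩ := discrete_eq_iUnion_separated (hTdisc n)
  have : {x : X | ∃ y : Y, (x, y) ∈ T n} = ⋃ m, {x : X | ∃ y : Y, (x, y) ∈ T' m} := by
    ext x
    simp only [Set.mem_setOf_eq, Set.mem_iUnion, hT', Set.mem_iUnion]
    exact ⟨fun ⟨y, m, h⟩ => ⟨m, y, h⟩, fun ⟨m, y, h⟩ => ⟨y, m, h⟩⟩
  rw [this]
  refine isSigmaDiscrete_iUnion _ fun m => ?_
  exact key (T' m) (1 / (m + 1)) (by positivity) (hsep m)
end

section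
/- Let X be a metrizable topological space, Y a dense subspace of a metrizable compact space Ȳ, L a closed nowhere dense subset of X, D = X \ L, and Φ a multifunction assigning to each x ∈ L a nonempty compact subset Φ(x) ⊆ Ȳ, upper continuous on L. Then there exist a set A ⊆ D that is discrete (every point of A has a neighborhood in X meeting A only in that point), with closure(A) \ A = L, and a function f : A → Y such that the cluster set f̄(x) equals Φ(x) for every x ∈ L. -/
/-!
Fix metrics on `X` and `Ȳ` and scales `δ n → 0`. At scale `n` take a maximal `δ n`-separated
set `M n ⊆ L` and a finite `δ n`-net `G n ⊆ Y` of `Ȳ`. For each centre `c ∈ M n` and each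
`t ∈ G n` that is `δ n`-close to `Φ` of some point of `L` near `c`, place a new point of `X \ L`
within `δ n / 4` of `c` and give it the value `t`; this is possible because `L` is nowhere dense,
so every ball around a point of `L` contains infinitely many points of `X \ L`. Separation of the
centres makes each scale locally finite, and points of scale `n` lie within `δ n` of `L`, so the
resulting set accumulates exactly at `L`. Near `x ∈ L` only late scales occur, where upper
continuity of `Φ` confines the values to a thickening of `Φ x`; conversely every point of `Φ x`
is approximated at every late scale.
-/

open Set

/-- The cluster set of a function `f : A → Z` (for `A ⊆ X`) at a point `x ∈ X`:
the intersection over all neighborhoods `U` of `x` of the closures of `f (U ∩ A)`. -/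
def clusterSet {X Z : Type*} [TopologicalSpace X] [TopologicalSpace Z] {A : Set X}
    (f : A → Z) (x : X) : Set Z :=
  ⋂ U ∈ nhds x, closure (f '' {a : A | (a : X) ∈ U})

open Filter Topology Metric Function

theorem exists_seq_of_forall_exists_extension {α : Type*} [Nonempty α] (P : ℕ → α → Prop)
    (R : ℕ → ℕ → α → α → Prop)
    (h : ∀ n (g : ℕ → α), (∀ k < n, P k (g k)) → ∃ a, P n a ∧ ∀ k < n, R k n (g k) a) :
    ∃ g : ℕ → α, ∀ n, P n (g n) ∧ ∀ k < n, R k n (g k) (g n) := by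
  choose! next hnext using h
  let g : ℕ → α := Nat.strongRec fun n g' => next n fun k => if hk : k < n then g' k hk else
    Classical.arbitrary α
  have hg : ∀ n, g n = next n fun k => if k < n then g k else Classical.arbitrary α := by
    intro n
    rw [show g n = _ from Nat.strongRec_eq _ n]
    simp only [dite_eq_ite]
    rfl
  refine ⟨g, fun n => ?_⟩
  induction n using Nat.strong_induction_on with | _ n ih =>
  have := hnext n (fun k => if k < n then g k else Classical.arbitrary α)
    fun k hk => by simpa [hk] using (ih k hk).1
  rw [hg n]
  simpa +contextual using this

section Topology

variable {X : Type*} [TopologicalSpace X]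

theorem eventually_nhdsNE_notMem_of_finite_inter [T1Space X] {A U : Set X} {x : X}
    (hA : (A ∩ U).Finite) (hU : U ∈ 𝓝 x) : ∀ᶠ a in 𝓝[≠] x, a ∉ A := by
  filter_upwards [nhdsNE_le_cofinite x hA.compl_mem_cofinite, nhdsWithin_le_nhds hU]
    with a haAU haU haA using haAU ⟨haA, haU⟩

theorem infinite_diff_union_of_interior_closure_eq_empty [T1Space X] {L S U : Set X}
    (hL : interior (closure L) = ∅) {x : X} (hx : x ∈ L) (hU : U ∈ 𝓝 x)
    (hS : ∀ᶠ a in 𝓝[≠] x, a ∉ S) : (U \ (L ∪ S)).Infinite := by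
  have hdense : Dense Lᶜ :=
    (interior_eq_empty_iff_dense_compl.1 hL).mono (compl_subset_compl.2 subset_closure)
  have hacc : AccPt x (𝓟 Lᶜ) :=
    (clusterPt_principal.1 (mem_closure_iff_clusterPt.1 (hdense x))).resolve_left (not_not.2 hx)
  intro hfin
  have hev : ∀ᶠ a in 𝓝[≠] x, a ∈ U ∧ a ∉ S ∧ a ∉ U \ (L ∪ S) := by
    filter_upwards [nhdsWithin_le_nhds hU, hS, nhdsNE_le_cofinite x hfin.compl_mem_cofinite]
      with a haU haS hafin using ⟨haU, haS, hafin⟩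
  obtain ⟨a, haL, haU, haS, hafin⟩ :=
    ((accPt_iff_frequently_nhdsNE.1 hacc).and_eventually hev).exists
  exact hafin ⟨haU, fun h => h.elim haL haS⟩

variable {A L : Set X}

theorem exists_nhds_inter_eq_singleton_of_eventually_notMem (hAL : Disjoint A L)
    (hacc : ∀ b ∉ L, ∀ᶠ a in 𝓝[≠] b, a ∉ A) : ∀ a ∈ A, ∃ U ∈ 𝓝 a, U ∩ A = {a} := by
  intro a ha
  obtain ⟨U, hU, hUA⟩ :=
    (eventually_nhdsWithin_iff.1 (hacc a (hAL.notMem_of_mem_left ha))).exists_mem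
  refine ⟨U, hU, Subset.antisymm (fun b ⟨hbU, hbA⟩ => ?_)
    (singleton_subset_iff.2 ⟨mem_of_mem_nhds hU, ha⟩)⟩
  by_contra hba
  exact hUA b hbU hba hbA

theorem closure_diff_eq_of_eventually_notMem (hAL : Disjoint A L) (hLA : L ⊆ closure A)
    (hacc : ∀ b ∉ L, ∀ᶠ a in 𝓝[≠] b, a ∉ A) : closure A \ A = L := by
  refine Subset.antisymm (fun b ⟨hbA, hb⟩ => ?_) fun x hx => ⟨hLA hx, hAL.notMem_of_mem_right hx⟩
  by_contra hbL
  refine mem_closure_iff_frequently.1 hbA ?_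
  filter_upwards [eventually_nhdsWithin_iff.1 (hacc b hbL)] with a ha haA
  exact ha (ne_of_mem_of_not_mem haA hb) haA

theorem mem_closure_of_clusterSet_nonempty {Z : Type*} [TopologicalSpace Z] {f : A → Z} {x : X}
    (h : (clusterSet f x).Nonempty) : x ∈ closure A := by
  obtain ⟨z, hz⟩ := h
  refine mem_closure_iff_nhds.2 fun U hU => ?_
  obtain ⟨_, a, ha, -⟩ := closure_nonempty_iff.1 ⟨z, mem_iInter₂.1 hz U hU⟩
  exact ⟨a, ha, a.2⟩

end Topology

section Metric

variable {X : Type*} [PseudoMetricSpace X]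

theorem exists_separated_net (s : Set X) {ε : ℝ} (hε : 0 < ε) :
    ∃ N ⊆ s, N.Pairwise (fun a b => ε ≤ dist a b) ∧ ∀ x ∈ s, ∃ c ∈ N, dist x c < ε := by
  obtain ⟨N, hN⟩ := zorn_subset {N | N ⊆ s ∧ N.Pairwise (fun a b => ε ≤ dist a b)}
    fun C hC hchain => ⟨⋃₀ C, ⟨sUnion_subset fun _ h => (hC h).1,
      (pairwise_sUnion hchain.directedOn).2 fun _ h => (hC h).2⟩, fun _ => subset_sUnion_of_mem⟩
  refine ⟨N, hN.prop.1, hN.prop.2, fun x hx => ?_⟩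
  by_contra! hfar
  have hxN : x ∉ N := fun h => (hfar x h).not_gt (by simpa using hε)
  refine hxN (hN.2 ⟨insert_subset hx hN.prop.1, hN.prop.2.insert fun c hc _ => ?_⟩
    (subset_insert x N) (mem_insert x N))
  exact ⟨hfar c hc, dist_comm x c ▸ hfar c hc⟩

theorem Dense.exists_finite_subset_forall_dist_lt [CompactSpace X]
    {Y : Set X} (hY : Dense Y) {ε : ℝ} (hε : 0 < ε) :
    ∃ G ⊆ Y, G.Finite ∧ ∀ z, ∃ t ∈ G, dist z t < ε := by
  obtain ⟨G, hGY, hG, hcover⟩ := isCompact_univ.elim_finite_subcover_image (b := Y)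
    (c := fun t => ball t ε) (fun _ _ => isOpen_ball) fun z _ => by
      obtain ⟨t, ht, hzt⟩ := hY.exists_dist_lt z hε
      exact mem_iUnion₂.2 ⟨t, ht, hzt⟩
  refine ⟨G, hGY, hG, fun z => ?_⟩
  obtain ⟨t, ht, hzt⟩ := mem_iUnion₂.1 (hcover (mem_univ z))
  exact ⟨t, ht, hzt⟩

end Metric

theorem clusterSet_choose_eq {ι X Z : Type*} [TopologicalSpace X] [PseudoMetricSpace Z]
    {p : ι → X} {T : Set ι} (hp : InjOn p T) (v : ι → Z) {x : X} {K : Set Z} (hK : IsClosed K)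
    (hsub : ∀ ε > 0, ∃ U ∈ 𝓝 x, ∀ i ∈ T, p i ∈ U → v i ∈ thickening ε K)
    (hsup : ∀ z ∈ K, ∀ U ∈ 𝓝 x, ∀ ε > 0, ∃ i ∈ T, p i ∈ U ∧ dist (v i) z < ε) :
    clusterSet (fun a : p '' T => v ((mem_image p T a).1 a.2).choose) x = K := by
  refine Subset.antisymm (fun z hz => ?_) fun z hz => mem_iInter₂.2 fun U hU => ?_
  · rw [← hK.closure_eq, closure_eq_iInter_cthickening]
    refine mem_iInter₂.2 fun ε hε => ?_
    obtain ⟨U, hU, hUK⟩ := hsub ε hε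
    refine closure_minimal ?_ isClosed_cthickening (mem_iInter₂.1 hz U hU)
    rintro _ ⟨a, ha, rfl⟩
    obtain ⟨hT, hpa⟩ := ((mem_image p T a).1 a.2).choose_spec
    exact thickening_subset_cthickening ε K (hUK _ hT (by rw [hpa]; exact ha))
  · refine Metric.mem_closure_iff.2 fun ε hε => ?_
    obtain ⟨i, hi, hiU, hiz⟩ := hsup z hz U hU ε hε
    have hpi : p i ∈ p '' T := mem_image_of_mem p hi
    refine ⟨_, ⟨⟨p i, hpi⟩, hiU, rfl⟩, ?_⟩
    obtain ⟨hT, hpa⟩ := ((mem_image p T (p i)).1 hpi).choose_spec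
    rw [dist_comm]
    simpa only [hp hT hi hpa] using hiz

section Stages

variable {X Z : Type*} [MetricSpace X]

theorem eventually_nhdsNE_notMem_biUnion_of_pairwise {M : Set X} {δ : ℝ} (hδ : 0 < δ)
    (hM : M.Pairwise (fun a b => δ ≤ dist a b)) {K : X → Set X} (hKfin : ∀ c ∈ M, (K c).Finite)
    (hK : ∀ c ∈ M, K c ⊆ ball c (δ / 4)) (z : X) : ∀ᶠ a in 𝓝[≠] z, a ∉ ⋃ c ∈ M, K c := by
  have hM' : (M ∩ ball z (δ / 2)).Subsingleton := fun c hc c' hc' =>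
    hM.eq hc.1 hc'.1 fun h => by
      linarith [dist_triangle_right c c' z, mem_ball.1 hc.2, mem_ball.1 hc'.2]
  refine eventually_nhdsNE_notMem_of_finite_inter
    ((hM'.finite.biUnion fun c hc => hKfin c hc.1).subset ?_)
    (ball_mem_nhds z (by positivity : 0 < δ / 4))
  rintro a ⟨ha, haz⟩
  obtain ⟨c, hc, hac⟩ := mem_iUnion₂.1 ha
  have hcz : dist c z < δ / 2 := by
    linarith [dist_triangle_left c z a, mem_ball.1 (hK c hc hac), mem_ball.1 haz]
  exact mem_iUnion₂.2 ⟨c, ⟨hc, hcz⟩, hac⟩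

theorem exists_injOn_mapsTo_ball_diff {L M S : Set X} {F : X → Set Z}
    (hL : interior (closure L) = ∅) (hML : M ⊆ L) (hF : ∀ c ∈ M, (F c).Finite) {r : ℝ}
    (hr : 0 < r) (hS : ∀ c ∈ M, ∀ᶠ a in 𝓝[≠] c, a ∉ S) :
    ∃ q : X → Z → X, ∀ c ∈ M, MapsTo (q c) (F c) (ball c r \ (L ∪ S)) ∧ InjOn (q c) (F c) := by
  have : ∀ c ∈ M, ∃ q : Z → X, MapsTo q (F c) (ball c r \ (L ∪ S)) ∧ InjOn q (F c) := by
    intro c hc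
    have : Nonempty X := ⟨c⟩
    have hinf := infinite_diff_union_of_interior_closure_eq_empty hL (hML hc) (ball_mem_nhds c hr)
      (hS c hc)
    obtain ⟨q, hq, hinj⟩ := (hF c hc).exists_injOn_of_encard_le (t := ball c r \ (L ∪ S))
      (hinf.encard_eq ▸ le_top)
    exact ⟨q, hq, hinj⟩
  classical
  choose q hq using this
  exact ⟨fun c => if hc : c ∈ M then q c hc else fun _ => c,
    fun c hc => by simpa [hc] using hq c hc⟩

variable {L : Set X} {M : ℕ → Set X} {F : ℕ → X → Set Z} {δ : ℕ → ℝ}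

theorem exists_disjoint_stage_maps (hL : interior (closure L) = ∅) (hML : ∀ n, M n ⊆ L)
    (hM : ∀ n, (M n).Pairwise (fun a b => δ n ≤ dist a b)) (hF : ∀ n, ∀ c ∈ M n, (F n c).Finite)
    (hδ : ∀ n, 0 < δ n) :
    ∃ g : ℕ → X → Z → X, ∀ n,
      (∀ c ∈ M n, MapsTo (g n c) (F n c) (ball c (δ n / 4) \ L) ∧ InjOn (g n c) (F n c)) ∧
      ∀ k < n, Disjoint (⋃ c ∈ M k, g k c '' F k c) (⋃ c ∈ M n, g n c '' F n c) := by
  have : Nonempty (X → Z → X) := ⟨fun c _ => c⟩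
  refine exists_seq_of_forall_exists_extension
    (fun n (q : X → Z → X) =>
      ∀ c ∈ M n, MapsTo (q c) (F n c) (ball c (δ n / 4) \ L) ∧ InjOn (q c) (F n c))
    (fun k n (q q' : X → Z → X) =>
      Disjoint (⋃ c ∈ M k, q c '' F k c) (⋃ c ∈ M n, q' c '' F n c))
    fun n g hg => ?_
  have hS : ∀ x, ∀ᶠ a in 𝓝[≠] x, a ∉ ⋃ k ∈ Iio n, ⋃ c ∈ M k, g k c '' F k c := by
    intro x
    simp only [mem_iUnion, exists_prop, not_exists, not_and]
    refine (eventually_all_finite (finite_Iio n)).2 fun k hk => ?_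
    have := eventually_nhdsNE_notMem_biUnion_of_pairwise (hδ k) (hM k)
      (fun c hc => (hF k c hc).image (g k c))
      (fun c hc => ((hg k hk) c hc).1.image_subset.trans sdiff_subset) x
    simpa using this
  obtain ⟨q, hq⟩ := exists_injOn_mapsTo_ball_diff hL (hML n) (hF n) (div_pos (hδ n) four_pos)
    fun c _ => hS c
  refine ⟨q, fun c hc => ⟨(hq c hc).1.mono_right (sdiff_subset_sdiff_right subset_union_left),
    (hq c hc).2⟩, fun k hk => disjoint_right.2 ?_⟩
  intro a ha hak
  obtain ⟨c, hc, t, ht, rfl⟩ : ∃ c ∈ M n, ∃ t ∈ F n c, q c t = a := by simpa using ha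
  exact ((hq c hc).1 ht).2 (Or.inr (mem_biUnion (show k ∈ Iio n from hk) hak))

/-- A tag `(n, c, t)` records a scale `n`, a centre `c ∈ M n` and a target value `t ∈ F n c`. -/
def tags (M : ℕ → Set X) (F : ℕ → X → Set Z) : Set (ℕ × X × Z) :=
  {i | i.2.1 ∈ M i.1 ∧ i.2.2 ∈ F i.1 i.2.1}

theorem exists_injOn_tags (hL : interior (closure L) = ∅) (hML : ∀ n, M n ⊆ L)
    (hM : ∀ n, (M n).Pairwise (fun a b => δ n ≤ dist a b)) (hF : ∀ n, ∀ c ∈ M n, (F n c).Finite)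
    (hδ : ∀ n, 0 < δ n) :
    ∃ p : ℕ × X × Z → X,
      InjOn p (tags M F) ∧ ∀ i ∈ tags M F, p i ∈ ball i.2.1 (δ i.1 / 4) \ L := by
  obtain ⟨g, hg⟩ := exists_disjoint_stage_maps hL hML hM hF hδ
  refine ⟨fun i => g i.1 i.2.1 i.2.2, ?_, fun i hi => ((hg i.1).1 _ hi.1).1 hi.2⟩
  have hmem : ∀ {n c t}, c ∈ M n → t ∈ F n c → g n c t ∈ ⋃ c ∈ M n, g n c '' F n c :=
    fun hc ht => mem_biUnion hc (mem_image_of_mem _ ht)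
  rintro ⟨m, c, t⟩ ⟨hc, ht⟩ ⟨n, c', t'⟩ ⟨hc', ht'⟩ (heq : g m c t = g n c' t')
  dsimp only at hc ht hc' ht'
  obtain rfl : m = n := by
    by_contra hmn
    rcases lt_or_gt_of_ne hmn with h | h
    · exact ((hg n).2 m h).ne_of_mem (hmem hc ht) (hmem hc' ht') heq
    · exact ((hg m).2 n h).ne_of_mem (hmem hc' ht') (hmem hc ht) heq.symm
  obtain rfl : c = c' := (hM m).eq hc hc' fun h => by
    have h₁ := mem_ball.1 (((hg m).1 c hc).1 ht).1
    have h₂ := mem_ball.1 (((hg m).1 c' hc').1 ht').1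
    rw [heq] at h₁
    linarith [dist_triangle_left c c' (g m c' t'), hδ m]
  obtain rfl := ((hg m).1 c hc).2 ht ht' heq
  rfl

variable {p : ℕ × X × Z → X}

theorem eventually_nhdsNE_forall_tags_ge (hδ : ∀ n, 0 < δ n)
    (hM : ∀ n, (M n).Pairwise (fun a b => δ n ≤ dist a b)) (hF : ∀ n, ∀ c ∈ M n, (F n c).Finite)
    (hp : ∀ i ∈ tags M F, p i ∈ ball i.2.1 (δ i.1 / 4)) (x : X) (N : ℕ) :
    ∀ᶠ a in 𝓝[≠] x, ∀ i ∈ tags M F, p i = a → N ≤ i.1 := by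
  have hstage : ∀ n ∈ Iio N, ∀ᶠ a in 𝓝[≠] x, a ∉ ⋃ c ∈ M n, (fun t => p (n, c, t)) '' F n c :=
    fun n _ => eventually_nhdsNE_notMem_biUnion_of_pairwise (hδ n) (hM n)
      (fun c hc => (hF n c hc).image _)
      (fun c hc => image_subset_iff.2 fun t ht => hp (n, c, t) ⟨hc, ht⟩) x
  filter_upwards [(eventually_all_finite (finite_Iio N)).2 hstage] with a ha
  rintro ⟨n, c, t⟩ ⟨hc, ht⟩ rfl
  by_contra! h
  exact ha n h (mem_biUnion hc (mem_image_of_mem _ ht))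

theorem eventually_nhdsNE_notMem_image_tags (hLc : IsClosed L) (hML : ∀ n, M n ⊆ L)
    (hδ : ∀ n, 0 < δ n) (hδ0 : Tendsto δ atTop (𝓝 0))
    (hM : ∀ n, (M n).Pairwise (fun a b => δ n ≤ dist a b)) (hF : ∀ n, ∀ c ∈ M n, (F n c).Finite)
    (hp : ∀ i ∈ tags M F, p i ∈ ball i.2.1 (δ i.1 / 4)) {b : X} (hb : b ∉ L) :
    ∀ᶠ a in 𝓝[≠] b, a ∉ p '' tags M F := by
  obtain ⟨ρ, hρ, hρL⟩ := Metric.isOpen_iff.1 hLc.isOpen_compl b hb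
  obtain ⟨N, hN⟩ := eventually_atTop.1 (hδ0.eventually (gt_mem_nhds hρ))
  filter_upwards [eventually_nhdsNE_forall_tags_ge hδ hM hF hp b N,
    nhdsWithin_le_nhds (ball_mem_nhds b (half_pos hρ))] with a ha hab
  rintro ⟨i, hi, rfl⟩
  refine hρL (mem_ball.2 ?_) (hML i.1 hi.1)
  linarith [dist_triangle_left i.2.1 b (p i), mem_ball.1 (hp i hi), mem_ball.1 hab,
    hN i.1 (ha i hi rfl)]

end Stages

section ClusterSet

variable {X Z : Type*} [MetricSpace X] [MetricSpace Z]

def approxTargets (L : Set X) (Φ : X → Set Z) (δ : ℕ → ℝ) (G : ℕ → Set Z) (n : ℕ) (c : X) :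
    Set Z :=
  G n ∩ thickening (δ n) (⋃ x ∈ L ∩ ball c (δ n), Φ x)

variable {L : Set X} {Φ : X → Set Z} {δ : ℕ → ℝ} {M : ℕ → Set X} {G : ℕ → Set Z}
  {p : ℕ × X × Z → X} {x : X}

theorem exists_tag_mem_nhds_dist_lt (hδ0 : Tendsto δ atTop (𝓝 0))
    (hMcov : ∀ n, ∀ x ∈ L, ∃ c ∈ M n, dist x c < δ n) (hGcov : ∀ n z, ∃ t ∈ G n, dist z t < δ n)
    (hp : ∀ i ∈ tags M (approxTargets L Φ δ G), p i ∈ ball i.2.1 (δ i.1 / 4)) (hx : x ∈ L) :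
    ∀ z ∈ Φ x, ∀ U ∈ 𝓝 x, ∀ ε > 0,
      ∃ i ∈ tags M (approxTargets L Φ δ G), p i ∈ U ∧ dist i.2.2 z < ε := by
  intro z hz U hU ε hε
  obtain ⟨ρ, hρ, hρU⟩ := Metric.mem_nhds_iff.1 hU
  obtain ⟨n, hn⟩ := (hδ0.eventually (gt_mem_nhds (lt_min (half_pos hρ) hε))).exists
  obtain ⟨c, hc, hxc⟩ := hMcov n x hx
  obtain ⟨t, ht, hzt⟩ := hGcov n z
  rw [dist_comm] at hzt
  have hi : (n, c, t) ∈ tags M (approxTargets L Φ δ G) :=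
    ⟨hc, ht, mem_thickening_iff.2 ⟨z, mem_biUnion ⟨hx, hxc⟩ hz, hzt⟩⟩
  refine ⟨_, hi, hρU (mem_ball.2 ?_), hzt.trans (hn.trans_le (min_le_right _ _))⟩
  linarith [dist_triangle (p (n, c, t)) c x, mem_ball.1 (hp _ hi), dist_comm x c,
    min_le_left (ρ / 2) ε]

theorem exists_nhds_forall_tags_mem_thickening (hδ : ∀ n, 0 < δ n)
    (hδ0 : Tendsto δ atTop (𝓝 0)) (hM : ∀ n, (M n).Pairwise (fun a b => δ n ≤ dist a b))
    (hGfin : ∀ n, (G n).Finite)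
    (hp : ∀ i ∈ tags M (approxTargets L Φ δ G), p i ∈ ball i.2.1 (δ i.1 / 4) \ L) (hx : x ∈ L)
    (hΦ : ∀ V, IsOpen V → Φ x ⊆ V → ∃ U ∈ 𝓝 x, ∀ u ∈ U ∩ L, Φ u ⊆ V) :
    ∀ ε > 0, ∃ U ∈ 𝓝 x, ∀ i ∈ tags M (approxTargets L Φ δ G), p i ∈ U →
      i.2.2 ∈ thickening ε (Φ x) := by
  intro ε hε
  obtain ⟨V, hV, hVΦ⟩ := hΦ _ isOpen_thickening (self_subset_thickening (half_pos hε) _)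
  obtain ⟨ρ, hρ, hρV⟩ := Metric.mem_nhds_iff.1 hV
  obtain ⟨N, hN⟩ :=
    eventually_atTop.1 (hδ0.eventually (gt_mem_nhds (lt_min (half_pos hρ) (half_pos hε))))
  have hU := eventually_nhdsWithin_iff.1 (eventually_nhdsNE_forall_tags_ge hδ hM
    (fun n _ _ => (hGfin n).subset inter_subset_left) (fun i hi => (hp i hi).1) x N)
  refine ⟨_, inter_mem hU (ball_mem_nhds x (by positivity : 0 < ρ / 4)), ?_⟩
  rintro ⟨n, c, t⟩ hi ⟨hiN, hix⟩
  have hnN := hN n (hiN (ne_of_mem_of_not_mem hx (hp _ hi).2).symm _ hi rfl)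
  have hlocal : (⋃ x' ∈ L ∩ ball c (δ n), Φ x') ⊆ thickening (ε / 2) (Φ x) := by
    refine iUnion₂_subset fun x' ⟨hx'L, hx'c⟩ => hVΦ x' ⟨hρV (mem_ball.2 ?_), hx'L⟩
    linarith [dist_triangle4 x' c (p (n, c, t)) x, mem_ball.1 hx'c, mem_ball.1 (hp _ hi).1,
      dist_comm c (p (n, c, t)), mem_ball.1 hix, min_le_left (ρ / 2) (ε / 2)]
  refine thickening_mono ?_ _ (thickening_thickening_subset _ _ _
    (thickening_subset_of_subset _ hlocal hi.2.2))
  linarith [min_le_right (ρ / 2) (ε / 2)]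

end ClusterSet

theorem exists_clusterSet_eq_of_metricSpace {X Z : Type*} [MetricSpace X] [MetricSpace Z]
    [CompactSpace Z] {Y : Set Z} (hY : Dense Y) {L : Set X} (hLc : IsClosed L)
    (hLnd : interior (closure L) = ∅) {Φ : X → Set Z} (hΦc : ∀ x ∈ L, IsClosed (Φ x))
    (hΦuc : ∀ x ∈ L, ∀ V : Set Z, IsOpen V → Φ x ⊆ V → ∃ U ∈ 𝓝 x, ∀ u ∈ U ∩ L, Φ u ⊆ V) :
    ∃ A : Set X, Disjoint A L ∧ (∀ b ∉ L, ∀ᶠ a in 𝓝[≠] b, a ∉ A) ∧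
      ∃ f : A → Z, (∀ a, f a ∈ Y) ∧ ∀ x ∈ L, clusterSet f x = Φ x := by
  obtain ⟨δ, -, hδ, hδ0⟩ := exists_seq_strictAnti_tendsto (0 : ℝ)
  choose M hML hM hMcov using fun n => exists_separated_net L (hδ n)
  choose G hGY hGfin hGcov using fun n => hY.exists_finite_subset_forall_dist_lt (hδ n)
  have hF : ∀ n, ∀ c ∈ M n, (approxTargets L Φ δ G n c).Finite :=
    fun n _ _ => (hGfin n).subset inter_subset_left
  obtain ⟨p, hpinj, hp⟩ := exists_injOn_tags hLnd hML hM hF hδ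
  have hpball : ∀ i ∈ tags M (approxTargets L Φ δ G), p i ∈ ball i.2.1 (δ i.1 / 4) :=
    fun i hi => (hp i hi).1
  refine ⟨p '' tags M (approxTargets L Φ δ G), disjoint_left.2 ?_,
    fun b hb => eventually_nhdsNE_notMem_image_tags hLc hML hδ hδ0 hM hF hpball hb,
    fun a => ((mem_image _ _ _).1 a.2).choose.2.2,
    fun a => hGY _ ((mem_image _ _ _).1 a.2).choose_spec.1.2.1, fun x hx => ?_⟩
  · rintro _ ⟨i, hi, rfl⟩
    exact (hp i hi).2
  exact clusterSet_choose_eq hpinj (fun i => i.2.2) (hΦc x hx)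
    (exists_nhds_forall_tags_mem_thickening hδ hδ0 hM hGfin hp hx (hΦuc x hx))
    (exists_tag_mem_nhds_dist_lt hδ0 hMcov hGcov hpball hx)

/-- Let `X` be a metrizable topological space, `Y` a dense subspace
of a metrizable compact space `Ȳ`, `L` a closed nowhere dense subset of `X`,
`D = X \ L`, and `Φ` an upper continuous multifunction assigning to each `x ∈ L` a
nonempty compact subset of `Ȳ`. Then there are a set `A ⊆ D` that is discrete (every
point of `A` has a neighborhood in `X` meeting `A` only in that point) with
`closure A \ A = L`, and a function `f : A → Y` whose cluster set at every `x ∈ L`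
equals `Φ x`. -/
theorem exists_discrete_set_and_function_with_clusterSet {X Ybar : Type*}
    [TopologicalSpace X] [TopologicalSpace.MetrizableSpace X]
    [TopologicalSpace Ybar] [TopologicalSpace.MetrizableSpace Ybar] [CompactSpace Ybar]
    (Y : Set Ybar) (hY : Dense Y)
    (L : Set X) (hLc : IsClosed L) (hLnd : interior (closure L) = ∅)
    (Φ : X → Set Ybar)
    (hΦne : ∀ x ∈ L, (Φ x).Nonempty) (hΦcomp : ∀ x ∈ L, IsCompact (Φ x))
    (hΦuc : ∀ x ∈ L, ∀ V : Set Ybar, IsOpen V → Φ x ⊆ V →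
      ∃ U ∈ nhds x, ∀ u ∈ U ∩ L, Φ u ⊆ V) :
    ∃ A : Set X, A ⊆ (Set.univ : Set X) \ L ∧
      (∀ a ∈ A, ∃ U ∈ nhds a, U ∩ A = {a}) ∧
      closure A \ A = L ∧
      ∃ f : A → Ybar, (∀ a : A, f a ∈ Y) ∧ ∀ x ∈ L, clusterSet f x = Φ x := by
  let := TopologicalSpace.metrizableSpaceMetric X
  let := TopologicalSpace.metrizableSpaceMetric Ybar
  obtain ⟨A, hAL, hacc, f, hfY, hf⟩ := exists_clusterSet_eq_of_metricSpace hY hLc hLnd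
    (fun x hx => (hΦcomp x hx).isClosed) hΦuc
  have hLA : L ⊆ closure A := fun x hx =>
    mem_closure_of_clusterSet_nonempty (f := f) (hf x hx ▸ hΦne x hx)
  exact ⟨A, fun a ha => ⟨mem_univ a, hAL.notMem_of_mem_left ha⟩,
    exists_nhds_inter_eq_singleton_of_eventually_notMem hAL hacc,
    closure_diff_eq_of_eventually_notMem hAL hLA hacc, f, hfY, hf⟩
end
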